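/- Every minimal separator of a chordal graph is the intersection of two maximal cliques. -/

import Mathlib

open SimpleGraph

variable {V : Type*}

/-- `S` separates `u` and `w` in `G`: every walk from `u` to `w` meets `S`. -/
def Separates (G : SimpleGraph V) (S : Set V) (u w : V) : Prop :=
  ∀ p : G.Walk u w, ∃ x ∈ p.support, x ∈ S

/-- `S` is a minimal `{u,w}`-separator. -/
def IsMinUWSeparator (G : SimpleGraph V) (S : Set V) (u w : V) : Prop :=
  u ≠ w ∧ ¬ G.Adj u w ∧ u ∉ S ∧ w ∉ S ∧ Separates G S u w ∧
    ∀ S' ⊂ S, ¬ Separates G S' u w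

/-- `S` is a minimal separator of `G`. -/
def IsMinSeparator (G : SimpleGraph V) (S : Set V) : Prop :=
  ∃ u w : V, IsMinUWSeparator G S u w

/-- A vertex is simplicial if its neighborhood is a clique. -/
def IsSimplicial (G : SimpleGraph V) (v : V) : Prop :=
  G.IsClique (G.neighborSet v)

/-- A maximal clique (as a vertex set). -/
def IsMaxClique (G : SimpleGraph V) (s : Set V) : Prop :=
  G.IsClique s ∧ ∀ t : Set V, G.IsClique t → s ⊆ t → s = t

/-- A graph is chordal if it has no induced cycle of length at least 4. -/
def Chordal (G : SimpleGraph V) : Prop :=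
  ∀ n : ℕ, 4 ≤ n → IsEmpty (SimpleGraph.cycleGraph n ↪g G)

/-- The type of maximal cliques of `G`. -/
abbrev MaxCliques (G : SimpleGraph V) := {s : Set V // IsMaxClique G s}

/-- `T` is a clique tree of `G`: a tree on the maximal cliques such that for each vertex
the cliques containing it induce a connected subgraph. -/
def IsCliqueTree (G : SimpleGraph V) (T : SimpleGraph (MaxCliques G)) : Prop :=
  T.IsTree ∧ ∀ v : V, (T.induce {Q : MaxCliques G | v ∈ Q.1}).Connected

/-- The set `X` induces a path in `T` (assuming `T` is a tree: connected with max degree 2). -/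
def InducesPath {α : Type*} (T : SimpleGraph α) (X : Set α) : Prop :=
  (T.induce X).Connected ∧ ∀ x : X, ((T.induce X).neighborSet x).ncard ≤ 2

/-- `T` is a clique path tree of `G`. -/
def IsCliquePathTree (G : SimpleGraph V) (T : SimpleGraph (MaxCliques G)) : Prop :=
  T.IsTree ∧ ∀ v : V, InducesPath T {Q : MaxCliques G | v ∈ Q.1}

/-- `G` is a path graph: the empty graph, or a graph admitting a clique path tree. -/
def IsPathGraph (G : SimpleGraph V) : Prop :=
  IsEmpty V ∨ ∃ T : SimpleGraph (MaxCliques G), IsCliquePathTree G T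

/-- `G` is an interval graph: intersection graph of closed real intervals. -/
def IsIntervalGraph (G : SimpleGraph V) : Prop :=
  ∃ f : V → Set ℝ, (∀ v, ∃ a b : ℝ, a ≤ b ∧ f v = Set.Icc a b) ∧
    ∀ u v : V, u ≠ v → (G.Adj u v ↔ (f u ∩ f v).Nonempty)

/-- `a` is a middle of `b, c`: every walk from `b` to `c` meets `N(a)`. -/
def IsMiddle (G : SimpleGraph V) (a b c : V) : Prop :=
  ∀ p : G.Walk b c, ∃ x ∈ p.support, G.Adj a x

/-- `a, b, c` form an asteroidal triple. -/
def AsteroidalTriple (G : SimpleGraph V) (a b c : V) : Prop :=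
  a ≠ b ∧ a ≠ c ∧ b ≠ c ∧ ¬ G.Adj a b ∧ ¬ G.Adj a c ∧ ¬ G.Adj b c ∧
  (∃ p : G.Walk b c, ∀ x ∈ p.support, ¬ G.Adj a x) ∧
  (∃ p : G.Walk a c, ∀ x ∈ p.support, ¬ G.Adj b x) ∧
  (∃ p : G.Walk a b, ∀ x ∈ p.support, ¬ G.Adj c x)

/-- The closed neighborhood clique `Q_v` of a simplicial vertex. -/
def Qv (G : SimpleGraph V) (v : V) : Set V := insert v (G.neighborSet v)

/-- `S_v`: the vertices of `Q_v` having a neighbor outside `Q_v`. -/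
def Sv (G : SimpleGraph V) (v : V) : Set V :=
  {x | x ∈ Qv G v ∧ ∃ y, y ∉ Qv G v ∧ G.Adj x y}

/-- A simplicial vertex is special if `S_v` is an inclusion-maximal minimal separator. -/
def IsSpecial (G : SimpleGraph V) (v : V) : Prop :=
  IsSimplicial G v ∧ IsMinSeparator G (Sv G v) ∧
    ∀ S : Set V, IsMinSeparator G S → Sv G v ⊆ S → S = Sv G v

/-- Connected components of `G ∖ S` containing a vertex complete to `S`. -/
def CompleteComponents (G : SimpleGraph V) (S : Set V) :
    Set ((G.induce (Sᶜ : Set V)).ConnectedComponent) :=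
  {C | ∃ x : (Sᶜ : Set V), (G.induce (Sᶜ : Set V)).connectedComponentMk x = C ∧
        S ⊆ G.neighborSet x.1}

/-- The wheel graph: an `n`-cycle plus a universal vertex (`none`). -/
def wheelGraph (n : ℕ) : SimpleGraph (Option (Fin n)) :=
  SimpleGraph.fromRel (fun a b =>
    (∃ i j : Fin n, a = some i ∧ b = some j ∧ (SimpleGraph.cycleGraph n).Adj i j) ∨
    (a = none ∧ b ≠ none))

/-- `y` lies on the tree-path between `x` and `z` in `T`. -/
def OnTreePath {α : Type*} (T : SimpleGraph α) (x y z : α) : Prop :=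
  ∃ p : T.Walk x z, p.IsPath ∧ y ∈ p.support

/-!
A minimal `u`–`w` separator `S` is full: every vertex of `S` has neighbours both in the
component `C_u` of `u` and in the component `C_w` of `w` in `G - S`. In a chordal graph, two
distinct vertices joined by walks through two disjoint vertex sets with no edges between them are
adjacent, since shortest such walks close up into a chordless cycle of length at least four.
This makes `S` a clique and, by a maximality argument, gives `x ∈ C_u` and `y ∈ C_w` adjacent to
all of `S`. Maximal cliques `Q ⊇ S ∪ {x}` and `Q' ⊇ S ∪ {y}` lie in `S ∪ C_u` and `S ∪ C_w`,
so `Q ∩ Q' = S`.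
-/

section Chordal

variable {G : SimpleGraph V}

lemma SimpleGraph.cycleGraph_adj_iff_mod {n : ℕ} (hn : 2 ≤ n) {i j : Fin n} :
    (cycleGraph n).Adj i j ↔ (j : ℕ) = (i + 1) % n ∨ (i : ℕ) = (j + 1) % n := by
  obtain ⟨m, rfl⟩ : ∃ m, n = m + 2 := ⟨n - 2, by omega⟩
  have key : ∀ a b : Fin (m + 2), a - b = 1 ↔ (a : ℕ) = (b + 1) % (m + 2) := by
    intro a b
    rw [sub_eq_iff_eq_add, Fin.ext_iff, Fin.val_add, Fin.val_one, Nat.add_comm 1]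
  rw [cycleGraph_adj, key, key, or_comm]

theorem Chordal.length_lt_four_of_isCycle_of_isChordless (hG : Chordal G) {v : V}
    {c : G.Walk v v} (hc : c.IsCycle) (hcl : c.IsChordless) : c.length < 4 := by
  by_contra! h4
  set n := c.length
  have hwrap : ∀ k < n, c.getVert ((k + 1) % n) = c.getVert (k + 1) := by
    intro k hk
    rcases Nat.lt_or_ge (k + 1) n with h | h
    · rw [Nat.mod_eq_of_lt h]
    · rw [show k + 1 = n by omega, Nat.mod_self, c.getVert_zero, c.getVert_length]
  have hinj : ∀ {i j : ℕ}, i < n → j < n → c.getVert i = c.getVert j → i = j :=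
    fun hi hj h => hc.getVert_injOn' (by simp; omega) (by simp; omega) h
  let f : Fin n ↪ V := ⟨fun i => c.getVert i, by intro i j h; exact Fin.ext (hinj i.2 j.2 h)⟩
  refine (hG n h4).false ⟨f, fun {i j} => ?_⟩
  change G.Adj (c.getVert i) (c.getVert j) ↔ _
  rw [cycleGraph_adj_iff_mod (by omega)]
  constructor
  · intro hadj
    obtain ⟨k, hk, he⟩ := c.mk_mem_edges_iff_exists.1 <|
      hcl.mem_edges (c.getVert_mem_support i) (c.getVert_mem_support j) hadj
    rw [← hwrap k hk] at he
    have hk' : (k + 1) % n < n := Nat.mod_lt _ (by omega)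
    rcases Sym2.eq_iff.1 he with ⟨h1, h2⟩ | ⟨h1, h2⟩
    · left
      rw [← hinj hk i.2 h1, ← hinj hk' j.2 h2]
    · right
      rw [← hinj hk j.2 h1, ← hinj hk' i.2 h2]
  · rintro (h | h)
    · rw [h, hwrap i i.2]
      exact c.adj_getVert_succ i.2
    · rw [h, hwrap j j.2]
      exact (c.adj_getVert_succ j.2).symm

end Chordal

namespace SimpleGraph.Walk

variable {G : SimpleGraph V} {u v : V}

lemma two_le_length_of_adj_of_notMem_edges {a b : V} (r : G.Walk a b) (hab : G.Adj a b)
    (he : s(a, b) ∉ r.edges) : 2 ≤ r.length := by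
  cases r with
  | nil => exact absurd rfl hab.ne
  | cons h r' =>
    cases r' with
    | nil => simp at he
    | cons _ _ => simp

/-- A chord `s(a, b)` is not an edge of `p`, so the stretch of `p` between `a` and `b` has length
at least two and can be replaced by the chord. -/
lemma exists_length_lt_of_not_isChordless [DecidableEq V] {p : G.Walk u v}
    (hp : ¬ p.IsChordless) :
    ∃ q : G.Walk u v, q.support ⊆ p.support ∧ q.length < p.length := by
  simp only [isChordless_iff_forall_mem_edges, not_forall] at hp
  obtain ⟨a, b, ha, hb, hab, he⟩ := hp
  have hsplit := congrArg length (p.take_spec ha)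
  rw [length_append] at hsplit
  have hb' : b ∈ (p.takeUntil a ha).support ∨ b ∈ (p.dropUntil a ha).support := by
    rwa [← mem_support_append_iff, take_spec]
  rcases hb' with hb' | hb'
  · set t := p.takeUntil a ha
    have htwo := (t.dropUntil b hb').two_le_length_of_adj_of_notMem_edges hab.symm
      fun h => he (Sym2.eq_swap ▸ p.edges_takeUntil_subset_edges ha
        (t.edges_dropUntil_subset_edges hb' h))
    have ht := congrArg length (t.take_spec hb')
    rw [length_append] at ht
    refine ⟨(t.takeUntil b hb').append (cons hab.symm (p.dropUntil a ha)), ?_, ?_⟩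
    · intro z hz
      rw [mem_support_append_iff, support_cons, List.mem_cons] at hz
      rcases hz with hz | rfl | hz
      · exact p.support_takeUntil_subset_support ha (t.support_takeUntil_subset_support hb' hz)
      · exact hb
      · exact p.support_dropUntil_subset_support ha hz
    · simp only [length_append, length_cons]
      omega
  · set d := p.dropUntil a ha
    have htwo := (d.takeUntil b hb').two_le_length_of_adj_of_notMem_edges hab
      fun h => he (p.edges_dropUntil_subset_edges ha (d.edges_takeUntil_subset_edges hb' h))
    have hd := congrArg length (d.take_spec hb')
    rw [length_append] at hd
    refine ⟨(p.takeUntil a ha).append (cons hab (d.dropUntil b hb')), ?_, ?_⟩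
    · intro z hz
      rw [mem_support_append_iff, support_cons, List.mem_cons] at hz
      rcases hz with hz | rfl | hz
      · exact p.support_takeUntil_subset_support ha hz
      · exact ha
      · exact p.support_dropUntil_subset_support ha (d.support_dropUntil_subset_support hb' hz)
    · simp only [length_append, length_cons]
      omega

theorem exists_isPath_isChordless_support_subset (p : G.Walk u v) :
    ∃ q : G.Walk u v, q.IsPath ∧ q.IsChordless ∧ q.support ⊆ p.support := by
  classical
  induction hn : p.length using Nat.strong_induction_on generalizing p with
  | _ n ih =>
    by_cases hpath : p.bypass.length < p.length
    · obtain ⟨q, hq, hqc, hqs⟩ := ih _ (hn ▸ hpath) p.bypass rfl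
      exact ⟨q, hq, hqc, fun _ hz => p.support_bypass_subset_support (hqs hz)⟩
    have hp : p.IsPath :=
      p.bypass_eq_self_of_length_le_length_bypass (by omega) ▸ p.bypass_isPath
    by_cases hc : p.IsChordless
    · exact ⟨p, hp, hc, List.Subset.refl _⟩
    obtain ⟨r, hrs, hrl⟩ := exists_length_lt_of_not_isChordless hc
    obtain ⟨q, hq, hqc, hqs⟩ := ih _ (hn ▸ hrl) r rfl
    exact ⟨q, hq, hqc, fun _ hz => hrs (hqs hz)⟩

lemma IsChordless.append_reverse {p q : G.Walk u v} (hp : p.IsChordless) (hq : q.IsChordless)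
    (hpq : ∀ a ∈ p.support, ∀ b ∈ q.support, G.Adj a b → a ∈ q.support ∨ b ∈ p.support) :
    (p.append q.reverse).IsChordless := by
  have cross : ∀ a ∈ p.support, ∀ b ∈ q.support, G.Adj a b →
      s(a, b) ∈ p.edges ∨ s(a, b) ∈ q.edges := by
    intro a ha b hb hab
    rcases hpq a ha b hb hab with ha' | hb'
    · exact Or.inr (hq.mem_edges ha' hb hab)
    · exact Or.inl (hp.mem_edges ha hb' hab)
  rw [isChordless_iff_forall_mem_edges]
  intro a b ha hb hab
  simp only [support_reverse, mem_support_append_iff, List.mem_reverse] at ha hb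
  simp only [edges_append, edges_reverse, List.mem_append, List.mem_reverse]
  rcases ha with ha | ha <;> rcases hb with hb | hb
  · exact Or.inl (hp.mem_edges ha hb hab)
  · exact cross a ha b hb hab
  · rw [Sym2.eq_swap]
    exact cross b hb a ha hab.symm
  · exact Or.inr (hq.mem_edges ha hb hab)

lemma IsPath.start_notMem_support_tail {p : G.Walk u v} (hp : p.IsPath) :
    u ∉ p.support.tail := by
  have := hp.support_nodup
  rw [← p.cons_tail_support] at this
  exact (List.nodup_cons.1 this).1

end SimpleGraph.Walk

open SimpleGraph.Walk in
theorem Chordal.adj_of_walks_through_separated_sets {G : SimpleGraph V} (hG : Chordal G)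
    {A B : Set V} (hAB : Disjoint A B) (hnadj : ∀ a ∈ A, ∀ b ∈ B, ¬ G.Adj a b) {x y : V}
    (hxy : x ≠ y) (p q : G.Walk x y) (hp : ∀ z ∈ p.support, z = x ∨ z = y ∨ z ∈ A)
    (hq : ∀ z ∈ q.support, z = x ∨ z = y ∨ z ∈ B) : G.Adj x y := by
  by_contra hadj
  obtain ⟨p', hp'path, hp'c, hp's⟩ := p.exists_isPath_isChordless_support_subset
  obtain ⟨q', hq'path, hq'c, hq's⟩ := q.exists_isPath_isChordless_support_subset
  have hlen : ∀ r : G.Walk x y, 2 ≤ r.length := by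
    intro r
    by_contra! h
    interval_cases hr : r.length
    · exact hxy (eq_of_length_eq_zero hr)
    · exact hadj (adj_of_length_eq_one hr)
  have hcyc : (p'.append q'.reverse).IsCycle := by
    refine hp'path.isCycle_append hq'path.reverse (fun z hzp hzq => ?_) (Or.inl (hlen p'))
    have hzx : z ≠ x := fun h => hp'path.start_notMem_support_tail (h ▸ hzp)
    have hzy : z ≠ y := fun h => hq'path.reverse.start_notMem_support_tail (h ▸ hzq)
    replace hzp := hp's (List.mem_of_mem_tail hzp)
    replace hzq : z ∈ q.support := hq's (by simpa using List.mem_of_mem_tail hzq)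
    obtain _ | _ | hzA := hp z hzp <;> obtain _ | _ | hzB := hq z hzq <;>
      first | contradiction | exact hAB.notMem_of_mem_left hzA hzB
  have hchordless : (p'.append q'.reverse).IsChordless := by
    refine hp'c.append_reverse hq'c fun a ha b hb hab => ?_
    by_contra! h
    obtain _ | _ | haA := hp a (hp's ha)
    · subst a; exact h.1 q'.start_mem_support
    · subst a; exact h.1 q'.end_mem_support
    obtain _ | _ | hbB := hq b (hq's hb)
    · subst b; exact h.2 p'.start_mem_support
    · subst b; exact h.2 p'.end_mem_support
    exact hnadj a haA b hbB hab
  have hlt := hG.length_lt_four_of_isCycle_of_isChordless hcyc hchordless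
  rw [length_append, length_reverse] at hlt
  have := hlen p'
  have := hlen q'
  omega

/-- The component of `u` in `G - S` (empty when `u ∈ S`). -/
def SimpleGraph.componentAvoiding (G : SimpleGraph V) (S : Set V) (u : V) : Set V :=
  {v | ∃ p : G.Walk u v, ∀ z ∈ p.support, z ∉ S}

namespace SimpleGraph

variable {G : SimpleGraph V} {S : Set V} {u v w : V}

lemma mem_componentAvoiding_self (hu : u ∉ S) : u ∈ G.componentAvoiding S u :=
  ⟨.nil, by simpa using hu⟩

lemma notMem_of_mem_componentAvoiding (hv : v ∈ G.componentAvoiding S u) : v ∉ S :=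
  let ⟨p, hp⟩ := hv
  hp v p.end_mem_support

lemma mem_componentAvoiding_symm (hv : v ∈ G.componentAvoiding S u) :
    u ∈ G.componentAvoiding S v :=
  let ⟨p, hp⟩ := hv
  ⟨p.reverse, fun z hz => hp z (by simpa using hz)⟩

lemma mem_componentAvoiding_trans (hv : v ∈ G.componentAvoiding S u)
    (hw : w ∈ G.componentAvoiding S v) : w ∈ G.componentAvoiding S u :=
  let ⟨p, hp⟩ := hv
  let ⟨q, hq⟩ := hw
  ⟨p.append q, fun z hz => (Walk.mem_support_append_iff p q).1 hz |>.elim (hp z) (hq z)⟩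

lemma mem_componentAvoiding_of_adj (hv : v ∈ G.componentAvoiding S u) (hvw : G.Adj v w)
    (hw : w ∉ S) : w ∈ G.componentAvoiding S u :=
  mem_componentAvoiding_trans hv
    ⟨hvw.toWalk, by simpa using ⟨notMem_of_mem_componentAvoiding hv, hw⟩⟩

lemma mem_componentAvoiding_of_mem_support {p : G.Walk u v} (hp : ∀ z ∈ p.support, z ∉ S)
    {w : V} (hw : w ∈ p.support) : w ∈ G.componentAvoiding S u := by
  classical
  exact ⟨p.takeUntil w hw, fun z hz => hp z (p.support_takeUntil_subset_support hw hz)⟩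

lemma exists_walk_support_subset_componentAvoiding (hv : v ∈ G.componentAvoiding S u)
    (hw : w ∈ G.componentAvoiding S u) :
    ∃ r : G.Walk v w, ∀ z ∈ r.support, z ∈ G.componentAvoiding S u := by
  obtain ⟨p, hp⟩ := hv
  obtain ⟨q, hq⟩ := hw
  refine ⟨p.reverse.append q, fun z hz => ?_⟩
  rcases (Walk.mem_support_append_iff _ _).1 hz with hz | hz
  · exact mem_componentAvoiding_of_mem_support hp (by simpa using hz)
  · exact mem_componentAvoiding_of_mem_support hq hz

lemma exists_walk_through_componentAvoiding {x y a b : V} (ha : a ∈ G.componentAvoiding S u)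
    (hax : G.Adj a x) (hb : b ∈ G.componentAvoiding S u) (hby : G.Adj b y) :
    ∃ p : G.Walk x y, ∀ z ∈ p.support, z = x ∨ z = y ∨ z ∈ G.componentAvoiding S u := by
  obtain ⟨r, hr⟩ := exists_walk_support_subset_componentAvoiding ha hb
  refine ⟨.cons hax.symm (r.concat hby), fun z hz => ?_⟩
  simp only [Walk.support_cons, Walk.support_concat, List.mem_cons, List.mem_append,
    List.mem_nil_iff, or_false] at hz
  rcases hz with rfl | hz | rfl
  · exact Or.inl rfl
  · exact Or.inr (Or.inr (hr z hz))
  · exact Or.inr (Or.inl rfl)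

lemma Walk.exists_adj_of_notMem_componentAvoiding (p : G.Walk u w) (hu : u ∉ S)
    (hw : w ∉ G.componentAvoiding S u) :
    ∃ a ∈ G.componentAvoiding S u, ∃ s ∈ S, s ∈ p.support ∧ G.Adj a s := by
  obtain ⟨d, hd, hd₁, hd₂⟩ := p.exists_boundary_dart _ (mem_componentAvoiding_self hu) hw
  refine ⟨d.fst, hd₁, d.snd, ?_, p.dart_snd_mem_support_of_mem_darts hd, d.adj⟩
  by_contra hS
  exact hd₂ (mem_componentAvoiding_of_adj hd₁ d.adj hS)

lemma not_adj_of_disjoint_componentAvoiding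
    (h : Disjoint (G.componentAvoiding S u) (G.componentAvoiding S w)) {a b : V}
    (ha : a ∈ G.componentAvoiding S u) (hb : b ∈ G.componentAvoiding S w) : ¬ G.Adj a b :=
  fun hab => h.notMem_of_mem_right hb
    (mem_componentAvoiding_of_adj ha hab (notMem_of_mem_componentAvoiding hb))

lemma IsClique.subset_union_componentAvoiding {Q : Set V} (hQ : G.IsClique Q) (hv : v ∈ Q)
    (hvC : v ∈ G.componentAvoiding S u) : Q ⊆ S ∪ G.componentAvoiding S u := by
  intro z hz
  by_cases hzS : z ∈ S
  · exact Or.inl hzS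
  by_cases hzv : z = v
  · exact Or.inr (hzv ▸ hvC)
  exact Or.inr (mem_componentAvoiding_of_adj hvC (hQ hv hz (Ne.symm hzv)) hzS)

end SimpleGraph

section Separator

variable {G : SimpleGraph V} {S : Set V} {u w : V}

lemma Separates.symm (h : Separates G S u w) : Separates G S w u := fun p =>
  let ⟨x, hx, hxS⟩ := h p.reverse
  ⟨x, by simpa using hx, hxS⟩

lemma Separates.notMem_componentAvoiding (h : Separates G S u w) :
    w ∉ G.componentAvoiding S u := fun ⟨p, hp⟩ =>
  let ⟨x, hx, hxS⟩ := h p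
  hp x hx hxS

lemma Separates.disjoint_componentAvoiding (h : Separates G S u w) :
    Disjoint (G.componentAvoiding S u) (G.componentAvoiding S w) :=
  Set.disjoint_left.2 fun _ hu hw =>
    h.notMem_componentAvoiding (mem_componentAvoiding_trans hu (mem_componentAvoiding_symm hw))

lemma IsMinUWSeparator.separates (h : IsMinUWSeparator G S u w) : Separates G S u w :=
  h.2.2.2.2.1

lemma IsMinUWSeparator.notMem_left (h : IsMinUWSeparator G S u w) : u ∉ S :=
  h.2.2.1

lemma IsMinUWSeparator.symm (h : IsMinUWSeparator G S u w) : IsMinUWSeparator G S w u :=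
  let ⟨huw, hadj, hu, hw, hsep, hmin⟩ := h
  ⟨huw.symm, fun h => hadj h.symm, hw, hu, hsep.symm, fun S' hS' h => hmin S' hS' h.symm⟩

lemma IsMinUWSeparator.exists_adj (h : IsMinUWSeparator G S u w) {s : V} (hs : s ∈ S) :
    ∃ a ∈ G.componentAvoiding S u, G.Adj a s := by
  obtain ⟨-, -, hu, -, hsep, hmin⟩ := h
  obtain ⟨p, hp⟩ : ∃ p : G.Walk u w, ∀ x ∈ p.support, x ∉ S \ {s} := by
    simpa [Separates] using hmin _ (Set.sdiff_singleton_ssubset.2 hs)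
  obtain ⟨a, ha, t, htS, htp, hat⟩ :=
    p.exists_adj_of_notMem_componentAvoiding hu hsep.notMem_componentAvoiding
  obtain rfl : t = s := by simpa [htS] using hp t htp
  exact ⟨a, ha, hat⟩

theorem IsMinUWSeparator.isClique (hG : Chordal G) (h : IsMinUWSeparator G S u w) :
    G.IsClique S := by
  intro x hx y hy hxy
  obtain ⟨a, ha, hax⟩ := h.exists_adj hx
  obtain ⟨b, hb, hby⟩ := h.exists_adj hy
  obtain ⟨a', ha', ha'x⟩ := h.symm.exists_adj hx
  obtain ⟨b', hb', hb'y⟩ := h.symm.exists_adj hy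
  obtain ⟨p, hp⟩ := exists_walk_through_componentAvoiding ha hax hb hby
  obtain ⟨q, hq⟩ := exists_walk_through_componentAvoiding ha' ha'x hb' hb'y
  have hdisj := h.separates.disjoint_componentAvoiding
  exact hG.adj_of_walks_through_separated_sets hdisj
    (fun a ha b hb => not_adj_of_disjoint_componentAvoiding hdisj ha hb) hxy p q hp hq

end Separator

section CompleteVertex

variable {G : SimpleGraph V} {S : Set V} {u : V}

/-- Choose `v` in the component with `S ∩ N(v)` inclusion-maximal. If `v` missed some `s ∈ S`,
walk inside the component from `v` towards a neighbour of `s` until first meeting one, `b`;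
maximality yields `t ∈ S ∩ N(v)` not adjacent to `b`, and the walks `t, s, b` and
`t, v, …, b` go through sets with no edges between them. -/
theorem Chordal.exists_forall_adj_of_isClique [Finite V] (hG : Chordal G) (hS : G.IsClique S)
    (hu : u ∉ S) (hfull : ∀ s ∈ S, ∃ a ∈ G.componentAvoiding S u, G.Adj a s) :
    ∃ v ∈ G.componentAvoiding S u, ∀ s ∈ S, G.Adj v s := by
  set C := G.componentAvoiding S u
  obtain ⟨v, hvC, hvmax⟩ := (Set.toFinite C).exists_maximalFor
    (fun z => S ∩ G.neighborSet z) C ⟨u, mem_componentAvoiding_self hu⟩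
  refine ⟨v, hvC, fun s hs => ?_⟩
  by_contra hvs
  obtain ⟨b₀, hb₀C, hb₀s⟩ := hfull s hs
  set B := {z | z ∈ C ∧ ¬ G.Adj z s}
  obtain ⟨r, hr⟩ := exists_walk_support_subset_componentAvoiding hvC hb₀C
  have hvB : v ∉ Bᶜ := by simpa [B] using ⟨hvC, hvs⟩
  obtain ⟨c, hc, b, hbB, hbr, hcb⟩ := r.exists_adj_of_notMem_componentAvoiding hvB
    fun h => notMem_of_mem_componentAvoiding h (by simpa [B] using fun _ => hb₀s)
  have hbC : b ∈ C := hr b hbr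
  have hbs : G.Adj b s := by simpa [B, hbC] using hbB
  obtain ⟨t, ⟨htS, hvt⟩, hbt⟩ : ∃ t ∈ S ∩ G.neighborSet v, ¬ G.Adj b t := by
    by_contra! h
    exact hvs (hvmax hbC (fun t ht => ⟨ht.1, h t ht⟩) ⟨hs, hbs⟩).2
  have hts : t ≠ s := by rintro rfl; exact hvs hvt
  have hSB : Disjoint ({s} : Set V) B := by
    simpa [B] using fun h => notMem_of_mem_componentAvoiding h hs
  obtain ⟨q, hq⟩ := exists_walk_through_componentAvoiding
    (mem_componentAvoiding_self hvB) hvt hc hcb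
  refine hbt (hG.adj_of_walks_through_separated_sets (A := {s}) hSB ?_ ?_
    (.cons (hS htS hs hts) (.cons hbs.symm .nil)) q (by simp) fun z hz => ?_).symm
  · rintro a rfl z hz
    exact fun h => hz.2 h.symm
  · rintro rfl
    exact notMem_of_mem_componentAvoiding hbC htS
  · obtain h | h | h := hq z hz
    · exact Or.inl h
    · exact Or.inr (Or.inl h)
    · exact Or.inr (Or.inr (by simpa using notMem_of_mem_componentAvoiding h))

end CompleteVertex

lemma exists_isMaxClique_superset [Finite V] {G : SimpleGraph V} {c : Set V}
    (hc : G.IsClique c) : ∃ Q, IsMaxClique G Q ∧ c ⊆ Q :=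
  let ⟨Q, hcQ, hQ⟩ := Finite.exists_le_maximal hc
  ⟨Q, ⟨hQ.1, fun _ ht hQt => hQt.antisymm (hQ.2 ht hQt)⟩, hcQ⟩

theorem stmt3 [Fintype V] (G : SimpleGraph V) (hG : Chordal G)
    (S : Set V) (hS : IsMinSeparator G S) :
    ∃ Q Q' : Set V, IsMaxClique G Q ∧ IsMaxClique G Q' ∧ Q ≠ Q' ∧ Q ∩ Q' = S := by
  obtain ⟨u, w, h⟩ := hS
  have hclique := h.isClique hG
  obtain ⟨x, hx, hxS⟩ :=
    hG.exists_forall_adj_of_isClique hclique h.notMem_left fun _ => h.exists_adj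
  obtain ⟨y, hy, hyS⟩ :=
    hG.exists_forall_adj_of_isClique hclique h.symm.notMem_left fun _ => h.symm.exists_adj
  obtain ⟨Q, hQ, hxQ⟩ := exists_isMaxClique_superset (hclique.insert fun s hs _ => hxS s hs)
  obtain ⟨Q', hQ', hyQ'⟩ := exists_isMaxClique_superset (hclique.insert fun s hs _ => hyS s hs)
  have hQu := hQ.1.subset_union_componentAvoiding (hxQ (Set.mem_insert x S)) hx
  have hQw := hQ'.1.subset_union_componentAvoiding (hyQ' (Set.mem_insert y S)) hy
  have hinter : Q ∩ Q' = S := by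
    refine subset_antisymm (fun z ⟨hzQ, hzQ'⟩ => ?_) fun s hs =>
      ⟨hxQ (Set.mem_insert_of_mem x hs), hyQ' (Set.mem_insert_of_mem y hs)⟩
    rcases hQu hzQ with hz | hzu
    · exact hz
    rcases hQw hzQ' with hz | hzw
    · exact hz
    exact absurd hzw (h.separates.disjoint_componentAvoiding.notMem_of_mem_left hzu)
  refine ⟨Q, Q', hQ, hQ', fun hQQ' => ?_, hinter⟩
  have : x ∈ Q ∩ Q' := ⟨hxQ (Set.mem_insert x S), hQQ' ▸ hxQ (Set.mem_insert x S)⟩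
  exact notMem_of_mem_componentAvoiding hx (hinter ▸ this)
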